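/- Let V be finite with |V| = n > 2N, S̄ ⊆ V with |S̄| = N, δ > 0, and f(S) = min{1 + |S ∩ S̄|, |S|} + δ·|S|. The function f is strictly increasing and submodular, and f(S̄)/f(R*) = (N + δN)/(1 + δN) for any R* ⊆ V \ S̄ with |R*| = N; hence this ratio tends to N as δ → 0⁺. -/

import Mathlib

/-!
Write `g S = min (1 + #(S ∩ A)) #S`. Adding an element of `A` raises `g` by one; adding an element
outside `A` raises it by one exactly when `S ⊆ A`. Both marginal gains can only drop as `S` grows,
so `g` is submodular, and the modular term `δ * #S` makes `g + δ * #S` strictly increasing.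
Finally `g` counts all `N` elements of `A` but only one of any `N` elements outside `A`, which
gives the ratio, and the ratio is continuous at `δ = 0` with value `N / 1`.
-/

open Finset Filter Topology

section CappedCard

variable {V : Type*} [DecidableEq V] (A : Finset V)

def cappedCard (S : Finset V) : ℕ := min (1 + #(S ∩ A)) #S

variable {A}

lemma cappedCard_mono {S T : Finset V} (hST : S ⊆ T) : cappedCard A S ≤ cappedCard A T := by
  have : #(S ∩ A) ≤ #(T ∩ A) := card_le_card (inter_subset_inter_right hST)
  have := card_le_card hST
  unfold cappedCard
  omega

lemma cappedCard_insert_add_le {S T : Finset V} {v : V} (hST : S ⊆ T) (hvT : v ∉ T) :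
    cappedCard A (insert v T) + cappedCard A S ≤ cappedCard A (insert v S) + cappedCard A T := by
  have hvS : v ∉ S := fun h => hvT (hST h)
  have hinter : #(S ∩ A) ≤ #(T ∩ A) := card_le_card (inter_subset_inter_right hST)
  have hsdiff : #(S \ A) ≤ #(T \ A) := card_le_card (sdiff_subset_sdiff hST subset_rfl)
  have hS := card_inter_add_card_sdiff S A
  have hT := card_inter_add_card_sdiff T A
  unfold cappedCard
  rw [card_insert_of_notMem hvS, card_insert_of_notMem hvT]
  by_cases hv : v ∈ A
  · rw [insert_inter_of_mem hv, insert_inter_of_mem hv,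
      card_insert_of_notMem (fun h => hvS (mem_inter.mp h).1),
      card_insert_of_notMem (fun h => hvT (mem_inter.mp h).1)]
    omega
  · rw [insert_inter_of_notMem hv, insert_inter_of_notMem hv]
    omega

lemma cappedCard_self : cappedCard A A = #A := by
  simp [cappedCard]

lemma cappedCard_of_disjoint {R : Finset V} (hR : Disjoint R A) : cappedCard A R = min 1 #R := by
  simp [cappedCard, disjoint_iff_inter_eq_empty.mp hR]

end CappedCard

section PerturbedCappedCard

variable {V : Type*} [DecidableEq V] {A : Finset V} {δ : ℝ}

def perturbedCappedCard (A : Finset V) (δ : ℝ) (S : Finset V) : ℝ := cappedCard A S + δ * #S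

lemma perturbedCappedCard_strictMono (hδ : 0 < δ) {S T : Finset V} (hST : S ⊂ T) :
    perturbedCappedCard A δ S < perturbedCappedCard A δ T := by
  have hcapped : (cappedCard A S : ℝ) ≤ cappedCard A T := mod_cast cappedCard_mono hST.subset
  have hcard : δ * #S < δ * #T := mul_lt_mul_of_pos_left (mod_cast card_lt_card hST) hδ
  unfold perturbedCappedCard
  linarith

lemma perturbedCappedCard_submodular {S T : Finset V} {v : V} (hST : S ⊆ T) (hvT : v ∉ T) :
    perturbedCappedCard A δ (insert v T) - perturbedCappedCard A δ T ≤
      perturbedCappedCard A δ (insert v S) - perturbedCappedCard A δ S := by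
  have hcapped : (cappedCard A (insert v T) : ℝ) + cappedCard A S ≤
      cappedCard A (insert v S) + cappedCard A T := mod_cast cappedCard_insert_add_le hST hvT
  unfold perturbedCappedCard
  rw [card_insert_of_notMem hvT, card_insert_of_notMem (fun h => hvT (hST h))]
  push_cast
  linarith

lemma perturbedCappedCard_self : perturbedCappedCard A δ A = #A + δ * #A := by
  simp [perturbedCappedCard, cappedCard_self]

lemma perturbedCappedCard_of_disjoint {R : Finset V} (hR : Disjoint R A) (hne : R.Nonempty) :
    perturbedCappedCard A δ R = 1 + δ * #R := by
  simp [perturbedCappedCard, cappedCard_of_disjoint hR, Nat.one_le_iff_ne_zero.mpr hne.card_pos.ne']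

end PerturbedCappedCard

lemma tendsto_ratio_nhdsGT_zero (a : ℝ) :
    Tendsto (fun δ : ℝ => (a + δ * a) / (1 + δ * a)) (𝓝[>] 0) (𝓝 a) := by
  have hcont : ContinuousAt (fun δ : ℝ => (a + δ * a) / (1 + δ * a)) 0 := by
    fun_prop (disch := norm_num)
  simpa using hcont.tendsto.mono_left nhdsWithin_le_nhds

theorem counterexample_curvature_general {V : Type*} [DecidableEq V] [Fintype V]
    (N : ℕ)
    (Sbar : Finset V) (hSbar : Sbar.card = N)
    (f : ℝ → Finset V → ℝ)
    (hf : ∀ (δ : ℝ) (S : Finset V),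
      f δ S = ((min (1 + (S ∩ Sbar).card) S.card : ℕ) : ℝ) + δ * S.card) :
    (∀ δ : ℝ, 0 < δ →
      (∀ S T : Finset V, S ⊂ T → f δ S < f δ T) ∧
      (∀ (S T : Finset V) (v : V), S ⊆ T → v ∉ T →
        f δ (insert v S) - f δ S ≥ f δ (insert v T) - f δ T) ∧
      (∀ Rstar : Finset V, Rstar ⊆ Sbarᶜ → Rstar.card = N →
        f δ Sbar / f δ Rstar = ((N : ℝ) + δ * N) / (1 + δ * N))) ∧
    Filter.Tendsto (fun δ : ℝ => ((N : ℝ) + δ * N) / (1 + δ * N))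
      (nhdsWithin 0 (Set.Ioi 0)) (nhds (N : ℝ)) := by
  obtain rfl : f = perturbedCappedCard Sbar := funext₂ hf
  refine ⟨fun δ hδ => ⟨fun S T => perturbedCappedCard_strictMono hδ,
    fun S T v => perturbedCappedCard_submodular, fun R hR hcard => ?_⟩,
    tendsto_ratio_nhdsGT_zero N⟩
  rw [perturbedCappedCard_self, hSbar]
  obtain rfl | hN := N.eq_zero_or_pos
  · simp -- both sides are `0 / _ = 0`, the left one via `0 / 0 = 0`
  · rw [perturbedCappedCard_of_disjoint (subset_compl_iff_disjoint_right.mp hR)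
      (card_pos.mp (hcard ▸ hN)), hcard]

/-- The function `f(S) = min(1 + |S ∩ S̄|, |S|) + δ|S|` is strictly increasing and submodular,
and the greedy-to-optimal ratio `f(S̄)/f(R*) = (N + δN)/(1 + δN)` tends to `N` as `δ → 0⁺`. -/
theorem counterexample_curvature {V : Type*} [DecidableEq V] [Fintype V]
    (n N : ℕ) (hn : Fintype.card V = n) (h2N : 2 * N < n)
    (Sbar : Finset V) (hSbar : Sbar.card = N)
    (f : ℝ → Finset V → ℝ)
    (hf : ∀ (δ : ℝ) (S : Finset V),
      f δ S = ((min (1 + (S ∩ Sbar).card) S.card : ℕ) : ℝ) + δ * S.card) :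
    (∀ δ : ℝ, 0 < δ →
      (∀ S T : Finset V, S ⊂ T → f δ S < f δ T) ∧
      (∀ (S T : Finset V) (v : V), S ⊆ T → v ∉ T →
        f δ (insert v S) - f δ S ≥ f δ (insert v T) - f δ T) ∧
      (∀ Rstar : Finset V, Rstar ⊆ Sbarᶜ → Rstar.card = N →
        f δ Sbar / f δ Rstar = ((N : ℝ) + δ * N) / (1 + δ * N))) ∧
    Filter.Tendsto (fun δ : ℝ => ((N : ℝ) + δ * N) / (1 + δ * N))
      (nhdsWithin 0 (Set.Ioi 0)) (nhds (N : ℝ)) :=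
  counterexample_curvature_general N Sbar hSbar f hf
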